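/- Let X be a nonempty finite subset of the hyperbolic plane ℍ with diameter D, contained in closedBall(o, R) with some point of X at distance exactly R from o, let c be a barycenter of X, and let μ ≥ 0. Suppose q ∈ X satisfies dist(o, q) ≥ R − μ and D/2 ≤ dist(q, o), and let g be a unit-speed geodesic from q to o. Then dist(g(D/2), c) ≤ 45 + (3/2)·μ. -/

import Mathlib

/-!
By Ptolemy's inequality applied to `sinh (d / 2)`, the hyperbolic plane satisfies Gromov's
four-point condition `d(x,y) + d(z,w) ≤ max (d(x,z) + d(y,w)) (d(x,w) + d(y,z)) + K` with
`K = 2 log 4`. Put `β = d(q,o)`, `D = diam X` and `ε = R - β ≤ μ`. If `p` lies on the geodesic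
from `q` to `o` with `d(p,q) = t`, the four-point condition for `z ∈ X` and `p, q, o` gives
`X ⊆ closedBall p (max (D - t) (ε + t) + K)`. Taking `t = (D - ε) / 2` (or the ball of radius `D`
about `q` if `D < ε`) bounds the minimal radius `r` by `(D + ε) / 2 + K`; taking `t = D / 2` puts
`X` in a ball of radius `D / 2 + ε + K` about `m = g (D / 2)`. The four-point condition for pairs
of points of `X` and the centres `c`, `m` then gives `D + d(c,m) ≤ r + (D / 2 + ε + K) + K`,
i.e. `d(c,m) ≤ 3K + 3ε / 2`.
-/

open scoped UpperHalfPlane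

/-- `c` is a barycenter of `X` if it is the center of a smallest closed ball containing
`X`. -/
def IsBarycenter (X : Set ℍ) (c : ℍ) : Prop :=
  ∃ r : ℝ, 0 ≤ r ∧ X ⊆ Metric.closedBall c r ∧
    ∀ (c' : ℍ) (r' : ℝ), 0 ≤ r' → X ⊆ Metric.closedBall c' r' → r ≤ r'

/-- `g` is a unit-speed geodesic from `a` to `b` in the hyperbolic plane. -/
def IsUnitSpeedGeodesic (g : ℝ → ℍ) (a b : ℍ) : Prop :=
  g 0 = a ∧ g (dist a b) = b ∧
    ∀ s t : ℝ, s ∈ Set.Icc 0 (dist a b) → t ∈ Set.Icc 0 (dist a b) →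
      dist (g s) (g t) = |s - t|

open Metric Real Set

/-- Gromov's four-point condition; in terms of Gromov products it is `δ`-hyperbolicity with
`δ = K / 2`. -/
def FourPointCondition (α : Type*) [PseudoMetricSpace α] (K : ℝ) : Prop :=
  ∀ x y z w : α, dist x y + dist z w ≤ max (dist x z + dist y w) (dist x w + dist y z) + K

namespace FourPointCondition

variable {α : Type*} [PseudoMetricSpace α] {K : ℝ}

theorem nonneg (hK : FourPointCondition α K) (x : α) : 0 ≤ K := by
  simpa using hK x x x x

theorem diam_add_dist_le (hK : FourPointCondition α K) {X : Set α} (hX : X.Nonempty)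
    {c m : α} {r s : ℝ} (hXc : X ⊆ closedBall c r) (hXm : X ⊆ closedBall m s) :
    diam X + dist c m ≤ r + s + K := by
  have key : ∀ x ∈ X, ∀ y ∈ X, dist x y + dist c m ≤ r + s + K := by
    intro x hx y hy
    have hxc := mem_closedBall.1 (hXc hx)
    have hyc := mem_closedBall.1 (hXc hy)
    have hxm := mem_closedBall.1 (hXm hx)
    have hym := mem_closedBall.1 (hXm hy)
    have := hK x y c m
    have : max (dist x c + dist y m) (dist x m + dist y c) ≤ r + s :=
      max_le (by linarith) (by linarith)
    linarith
  obtain ⟨x, hx⟩ := hX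
  have hC : 0 ≤ r + s + K - dist c m := by linarith [key x hx x hx, dist_self x]
  have := diam_le_of_forall_dist_le hC fun x hx y hy => by linarith [key x hx y hy]
  linarith

theorem subset_closedBall_between (hK : FourPointCondition α K) {X : Set α} {q o p : α}
    {D R t : ℝ} (hXq : X ⊆ closedBall q D) (hXo : X ⊆ closedBall o R) (hpq : dist p q = t)
    (hpo : dist p o = dist q o - t) :
    X ⊆ closedBall p (max (D - t) (R - dist q o + t) + K) := by
  intro z hz
  have hzq := mem_closedBall.1 (hXq hz)
  have hzo := mem_closedBall.1 (hXo hz)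
  have := hK z p q o
  have : max (dist z q + dist p o) (dist z o + dist p q) ≤
      max (D - t) (R - dist q o + t) + dist q o := by
    rw [hpq, hpo, ← max_add_add_right]
    exact max_le_max (by linarith) (by linarith)
  rw [mem_closedBall]
  linarith

theorem exists_subset_closedBall (hK : FourPointCondition α K) {X : Set α} {q o : α} {D R : ℝ}
    {g : ℝ → α} (hg : ∀ t ∈ Icc 0 (dist q o), dist (g t) q = t ∧ dist (g t) o = dist q o - t)
    (hXq : X ⊆ closedBall q D) (hXo : X ⊆ closedBall o R) (hD : D ≤ R + dist q o) :
    ∃ p, X ⊆ closedBall p (D / 2 + (R - dist q o) / 2 + K) := by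
  rcases le_or_gt D (R - dist q o) with hDε | hεD
  · refine ⟨q, hXq.trans (closedBall_subset_closedBall ?_)⟩
    linarith [hK.nonneg q]
  · obtain ⟨hpq, hpo⟩ := hg ((D - (R - dist q o)) / 2) ⟨by linarith, by linarith⟩
    refine ⟨_, (hK.subset_closedBall_between hXq hXo hpq hpo).trans
      (closedBall_subset_closedBall ?_)⟩
    rw [max_eq_left (by linarith)]
    linarith

end FourPointCondition

theorem Real.sinh_mul_sinh_le_exp_add_div_four {a b : ℝ} (hb : 0 ≤ b) :
    sinh a * sinh b ≤ exp (a + b) / 4 := by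
  have sinh_le : ∀ x, sinh x ≤ exp x / 2 := fun x => by
    rw [sinh_eq]
    linarith [exp_pos (-x)]
  calc sinh a * sinh b ≤ exp a / 2 * (exp b / 2) :=
        mul_le_mul (sinh_le a) (sinh_le b) (sinh_nonneg_iff.2 hb) (by positivity)
    _ = exp (a + b) / 4 := by rw [exp_add]; ring

theorem Real.add_le_of_sinh_half_mul_sinh_half_le {a b M : ℝ} (ha : 0 ≤ a) (hb : 0 ≤ b)
    (haM : a ≤ M) (hbM : b ≤ M) (h : sinh (a / 2) * sinh (b / 2) ≤ exp (M / 2) / 2) :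
    a + b ≤ M + 2 * log 4 := by
  have sinh_ge : ∀ x, 0 ≤ x → (exp x - 1) / 2 ≤ sinh x := fun x hx => by
    rw [sinh_eq, exp_neg]
    linarith [inv_le_one_of_one_le₀ (one_le_exp hx)]
  have hA : 1 ≤ exp (a / 2) := one_le_exp (by linarith)
  have hB : 1 ≤ exp (b / 2) := one_le_exp (by linarith)
  have hAM : exp (a / 2) ≤ exp (M / 2) := exp_le_exp.2 (by linarith)
  have hBM : exp (b / 2) ≤ exp (M / 2) := exp_le_exp.2 (by linarith)
  have hprod : (exp (a / 2) - 1) / 2 * ((exp (b / 2) - 1) / 2) ≤ exp (M / 2) / 2 :=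
    (mul_le_mul (sinh_ge _ (by linarith)) (sinh_ge _ (by linarith)) (by linarith)
      (sinh_nonneg_iff.2 (by linarith))).trans h
  have : exp ((a + b) / 2) ≤ exp (M / 2 + log 4) := by
    rw [exp_add, exp_log (by norm_num), add_div, exp_add]
    nlinarith
  linarith [exp_le_exp.1 this]

namespace UpperHalfPlane

/-- The denominator is symmetric in the four points, so Euclidean inequalities between such
products transfer to the hyperbolic side. -/
theorem sinh_half_dist_mul_sinh_half_dist (x y z w : ℍ) :
    sinh (dist x y / 2) * sinh (dist z w / 2) =
      dist (x : ℂ) y * dist (z : ℂ) w / (4 * (√x.im * √y.im * √z.im * √w.im)) := by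
  simp only [sinh_half_dist, Real.sqrt_mul x.im_pos.le, Real.sqrt_mul z.im_pos.le,
    div_mul_div_comm]
  ring

theorem sinh_half_dist_mul_sinh_half_dist_le (x y z w : ℍ) :
    sinh (dist x y / 2) * sinh (dist z w / 2) ≤
      sinh (dist x z / 2) * sinh (dist y w / 2) + sinh (dist x w / 2) * sinh (dist y z / 2) := by
  have hP := EuclideanGeometry.mul_dist_le_mul_dist_add_mul_dist (x : ℂ) z y w
  rw [dist_comm (z : ℂ) y] at hP
  have hxzyw : √x.im * √z.im * √y.im * √w.im = √x.im * √y.im * √z.im * √w.im := by ring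
  have hxwyz : √x.im * √w.im * √y.im * √z.im = √x.im * √y.im * √z.im * √w.im := by ring
  rw [sinh_half_dist_mul_sinh_half_dist, sinh_half_dist_mul_sinh_half_dist,
    sinh_half_dist_mul_sinh_half_dist, hxzyw, hxwyz, ← add_div]
  gcongr
  linarith

theorem fourPointCondition : FourPointCondition ℍ (2 * log 4) := by
  intro x y z w
  set M := max (dist x z + dist y w) (dist x w + dist y z)
  have h₁ : dist x z + dist y w ≤ M := le_max_left _ _
  have h₂ : dist x w + dist y z ≤ M := le_max_right _ _
  have hPtolemy : sinh (dist x y / 2) * sinh (dist z w / 2) ≤ exp (M / 2) / 2 := by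
    have e₁ := exp_le_exp.2 (show dist x z / 2 + dist y w / 2 ≤ M / 2 by linarith)
    have e₂ := exp_le_exp.2 (show dist x w / 2 + dist y z / 2 ≤ M / 2 by linarith)
    have s₁ := sinh_mul_sinh_le_exp_add_div_four (a := dist x z / 2) (b := dist y w / 2)
      (by positivity)
    have s₂ := sinh_mul_sinh_le_exp_add_div_four (a := dist x w / 2) (b := dist y z / 2)
      (by positivity)
    linarith [sinh_half_dist_mul_sinh_half_dist_le x y z w]
  refine add_le_of_sinh_half_mul_sinh_half_le dist_nonneg dist_nonneg ?_ ?_ hPtolemy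
  · linarith [dist_triangle x z y, dist_triangle x w y, dist_comm z y, dist_comm w y]
  · linarith [dist_triangle z x w, dist_triangle z y w, dist_comm z x, dist_comm z y]

end UpperHalfPlane

theorem IsUnitSpeedGeodesic.dist_apply {g : ℝ → ℍ} {a b : ℍ} (hg : IsUnitSpeedGeodesic g a b)
    {t : ℝ} (ht : t ∈ Icc 0 (dist a b)) : dist (g t) a = t ∧ dist (g t) b = dist a b - t := by
  obtain ⟨hg0, hg1, hiso⟩ := hg
  have h0 := hiso t 0 ht ⟨le_rfl, dist_nonneg⟩
  have h1 := hiso t (dist a b) ht ⟨dist_nonneg, le_rfl⟩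
  rw [hg0] at h0
  rw [hg1] at h1
  rw [h0, h1, sub_zero, abs_of_nonneg ht.1, abs_of_nonpos (by linarith [ht.2])]
  exact ⟨rfl, by ring⟩

theorem barycenter_approximation_general (X : Set ℍ)
    (o : ℍ) (R : ℝ) (hXR : X ⊆ Metric.closedBall o R)
    (c : ℍ) (hc : IsBarycenter X c)
    (μ : ℝ)
    (q : ℍ) (hq : q ∈ X) (hqμ : R - μ ≤ dist o q)
    (hD : Metric.diam X / 2 ≤ dist q o)
    (g : ℝ → ℍ) (hg : IsUnitSpeedGeodesic g q o) :
    dist (g (Metric.diam X / 2)) c ≤ 45 + 3 / 2 * μ := by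
  obtain ⟨r, -, hXc, hr_min⟩ := hc
  have hK := UpperHalfPlane.fourPointCondition
  have hXq : X ⊆ closedBall q (diam X) := fun z hz =>
    mem_closedBall.2 (dist_le_diam_of_mem (isBounded_closedBall.subset hXR) hz hq)
  have hqo : dist q o ≤ R := mem_closedBall.1 (hXR hq)
  obtain ⟨p, hXp⟩ := hK.exists_subset_closedBall (fun t ht => hg.dist_apply ht) hXq hXR
    (by linarith)
  have hr := hr_min p _ (nonempty_closedBall.1 ⟨q, hXp hq⟩) hXp
  obtain ⟨hmq, hmo⟩ := hg.dist_apply ⟨by linarith [diam_nonneg (s := X)], hD⟩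
  have hXm := hK.subset_closedBall_between hXq hXR hmq hmo
  rw [max_eq_right (by linarith)] at hXm
  have := hK.diam_add_dist_le ⟨q, hq⟩ hXc hXm
  have hlog : log 4 ≤ 3 := by linarith [log_le_sub_one_of_pos (show (0 : ℝ) < 4 by norm_num)]
  rw [dist_comm] at hqμ ⊢
  linarith

/-- Barycenter approximation with `δ = 5`: traveling `D/2` along the geodesic from a
near-boundary point `q` of `X` towards the center lands `(45 + 3μ/2)`-close to the
barycenter of `X`. -/
theorem barycenter_approximation (X : Set ℍ) (hfin : X.Finite) (hne : X.Nonempty)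
    (o : ℍ) (R : ℝ) (hR : 0 ≤ R) (hXR : X ⊆ Metric.closedBall o R)
    (p' : ℍ) (hp' : p' ∈ X) (hdist : dist o p' = R)
    (c : ℍ) (hc : IsBarycenter X c)
    (μ : ℝ) (hμ : 0 ≤ μ)
    (q : ℍ) (hq : q ∈ X) (hqμ : R - μ ≤ dist o q)
    (hD : Metric.diam X / 2 ≤ dist q o)
    (g : ℝ → ℍ) (hg : IsUnitSpeedGeodesic g q o) :
    dist (g (Metric.diam X / 2)) c ≤ 45 + 3 / 2 * μ :=
  barycenter_approximation_general X o R hXR c hc μ q hq hqμ hD g hg
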